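/- Let G be a group, H ≤ G a subgroup of index 2, t ∈ G \ H, and let f : H → ℝ be a pseudocharacter. Define f_t : H → ℝ by f_t(h) = f(h) − f(t⁻¹ht). Then f_t is a pseudocharacter on H satisfying f_t(t⁻¹ht) = −f_t(h) for all h ∈ H; and if f_t is not identically zero, then the map A : G × ℝ → ℝ defined by A(g,x) = f_t(g) + x for g ∈ H and A(th, x) = −f_t(h) − x for h ∈ H is a cobounded (1,C)-quasi-action of G on ℝ for some C ≥ 0. -/
import Mathlib


/-- A (K,C)-quasi-action of `G` on a metric space `X`. -/
def IsQuasiAction {G X : Type*} [Group G] [MetricSpace X] (K C : ℝ) (A : G → X → X) : Prop :=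
  (∀ g : G,
    (∀ x y : X, dist x y / K - C ≤ dist (A g x) (A g y) ∧
      dist (A g x) (A g y) ≤ K * dist x y + C) ∧
    ∀ y : X, ∃ x : X, dist y (A g x) ≤ C) ∧
  ∀ g h : G, ∀ x : X, dist (A g (A h x)) (A (g * h) x) ≤ C

/-- The twisted map `f_t(h) = f(h) − f(t⁻¹ht)`. -/
def ft {G : Type*} [Group G] (f : G → ℝ) (t : G) (h : G) : ℝ :=
  f h - f (t⁻¹ * h * t)

/-- for a pseudocharacter `f` on an index-2 subgroup `H` of `G` and
`t ∈ G \ H`, the map `f_t(h) = f(h) − f(t⁻¹ht)` is a pseudocharacter on `H` with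
`f_t(t⁻¹ht) = −f_t(h)`; and if `f_t ≢ 0` on `H`, the formulas `A(g,x) = f_t(g)+x` for
`g ∈ H` and `A(th,x) = −f_t(h)−x` define a cobounded (1,C)-quasi-action of `G` on ℝ. -/
theorem stmt_15 (G : Type) [Group G] (H : Subgroup G) (hH : H.index = 2)
    (t : G) (ht : t ∉ H) (f : G → ℝ) (D : ℝ)
    -- f is a pseudocharacter on H with defect at most D
    (hD : ∀ h₁ h₂ : G, h₁ ∈ H → h₂ ∈ H → |f (h₁ * h₂) - f h₁ - f h₂| ≤ D)
    (hhom : ∀ h ∈ H, ∀ n : ℤ, f (h ^ n) = (n : ℝ) * f h) :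
    -- f_t is a pseudocharacter on H
    ((∃ D' : ℝ, ∀ h₁ h₂ : G, h₁ ∈ H → h₂ ∈ H →
        |ft f t (h₁ * h₂) - ft f t h₁ - ft f t h₂| ≤ D') ∧
      ∀ h ∈ H, ∀ n : ℤ, ft f t (h ^ n) = (n : ℝ) * ft f t h) ∧
    -- f_t(t⁻¹ht) = −f_t(h)
    (∀ h ∈ H, ft f t (t⁻¹ * h * t) = - ft f t h) ∧
    -- if f_t is not identically zero on H, we get a cobounded (1,C)-quasi-action on ℝ
    ((∃ h ∈ H, ft f t h ≠ 0) →
      ∀ A : G → ℝ → ℝ,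
        (∀ g ∈ H, ∀ x : ℝ, A g x = ft f t g + x) →
        (∀ h ∈ H, ∀ x : ℝ, A (t * h) x = - ft f t h - x) →
        ∃ C : ℝ, 0 ≤ C ∧ IsQuasiAction 1 C A ∧
          ∀ x : ℝ, ∃ C' : ℝ, 0 ≤ C' ∧ ∀ y : ℝ, ∃ g : G, dist (A g x) y ≤ C') := by
  -- basic membership facts
  have hconjmem : ∀ h ∈ H, t⁻¹ * h * t ∈ H := by
    intro h hh
    have h1 : h * t ∉ H := by
      rw [Subgroup.mul_mem_iff_of_index_two hH]; simp [hh, ht]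
    have h2 : t⁻¹ ∉ H := by simpa using ht
    have : t⁻¹ * (h * t) ∈ H := by
      rw [Subgroup.mul_mem_iff_of_index_two hH]; simp [h1, h2]
    simpa [mul_assoc] using this
  have hcoset : ∀ g : G, g ∉ H → t⁻¹ * g ∈ H := by
    intro g hg
    have h2 : t⁻¹ ∉ H := by simpa using ht
    rw [Subgroup.mul_mem_iff_of_index_two hH]; simp [h2, hg]
  have htt : t * t ∈ H := Subgroup.mul_self_mem_of_index_two hH t
  -- f 1 = 0 and 0 ≤ D
  have f1 : f 1 = 0 := by simpa using hhom 1 H.one_mem 0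
  have hD0 : (0:ℝ) ≤ D := by
    have := hD 1 1 H.one_mem H.one_mem
    simpa [f1] using this
  have hinv : ∀ s ∈ H, f s⁻¹ = - f s := by
    intro s hs
    have := hhom s hs (-1)
    simpa using this
  -- conjugation invariance of f on H
  have hclass : ∀ s ∈ H, ∀ h ∈ H, f (s⁻¹ * h * s) = f h := by
    intro s hs h hh
    have hmem : s⁻¹ * h * s ∈ H := by
      exact H.mul_mem (H.mul_mem (H.inv_mem hs) hh) hs
    by_contra hne
    set c : ℝ := f (s⁻¹ * h * s) - f h with hc
    have hc0 : c ≠ 0 := sub_ne_zero.mpr hne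
    obtain ⟨n, hn⟩ := exists_nat_gt (2 * D / |c|)
    have key : ∀ m : ℤ, |(m : ℝ) * c| ≤ 2 * D := by
      intro m
      have e1 : (s⁻¹ * h * s) ^ m = s⁻¹ * h ^ m * s := by
        have := conj_zpow (i := m) (a := s⁻¹) (b := h)
        simpa using this
      have e2 : f ((s⁻¹ * h * s) ^ m) = (m : ℝ) * f (s⁻¹ * h * s) := hhom _ hmem m
      have e3 : f (h ^ m) = (m : ℝ) * f h := hhom h hh m
      have hm : h ^ m ∈ H := H.zpow_mem hh m
      have b1 : |f (s⁻¹ * (h ^ m * s)) - f s⁻¹ - f (h ^ m * s)| ≤ D :=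
        hD _ _ (H.inv_mem hs) (H.mul_mem hm hs)
      have b2 : |f (h ^ m * s) - f (h ^ m) - f s| ≤ D := hD _ _ hm hs
      have e4 : s⁻¹ * (h ^ m * s) = s⁻¹ * h ^ m * s := by group
      rw [e4] at b1
      rw [hinv s hs] at b1
      have : |(m : ℝ) * c| = |f (s⁻¹ * h ^ m * s) - f (h ^ m)| := by
        rw [← e1, e2, e3, hc]; ring_nf
      rw [this]
      have b1' := abs_le.mp b1
      have b2' := abs_le.mp b2
      rw [abs_le]; constructor <;> linarith
    have := key (n : ℤ)
    have hcpos : 0 < |c| := abs_pos.mpr hc0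
    rw [abs_mul] at this
    have : (2 * D) / |c| ≥ (n : ℝ) := by
      rw [ge_iff_le, le_div_iff₀ hcpos]
      simpa using this
    push_cast at hn
    linarith
  -- defect of ft
  have hft2 : ∀ h₁ h₂ : G, h₁ ∈ H → h₂ ∈ H →
      |ft f t (h₁ * h₂) - ft f t h₁ - ft f t h₂| ≤ 2 * D := by
    intro h₁ h₂ hh₁ hh₂
    have e : t⁻¹ * (h₁ * h₂) * t = (t⁻¹ * h₁ * t) * (t⁻¹ * h₂ * t) := by group
    have b1 := hD h₁ h₂ hh₁ hh₂
    have b2 := hD _ _ (hconjmem h₁ hh₁) (hconjmem h₂ hh₂)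
    simp only [ft, e]
    have b1' := abs_le.mp b1
    have b2' := abs_le.mp b2
    rw [abs_le]; constructor <;> linarith
  -- homogeneity of ft
  have hfthom : ∀ h ∈ H, ∀ n : ℤ, ft f t (h ^ n) = (n : ℝ) * ft f t h := by
    intro h hh n
    have e1 : t⁻¹ * h ^ n * t = (t⁻¹ * h * t) ^ n := by
      have := conj_zpow (i := n) (a := t⁻¹) (b := h)
      simpa using this.symm
    simp only [ft, e1, hhom h hh n, hhom _ (hconjmem h hh) n]
    ring
  -- ft (t⁻¹ h t) = - ft h
  have hneg : ∀ h ∈ H, ft f t (t⁻¹ * h * t) = - ft f t h := by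
    intro h hh
    have e : t⁻¹ * (t⁻¹ * h * t) * t = (t*t)⁻¹ * h * (t*t) := by group
    simp only [ft, e, hclass (t*t) htt h hh]
    ring
  refine ⟨⟨⟨2 * D, hft2⟩, hfthom⟩, hneg, ?_⟩
  -- the quasi-action
  rintro ⟨h₀, hh₀, hc0⟩ A hA1 hA2
  have hA2' : ∀ g : G, g ∉ H → ∀ x : ℝ, A g x = - ft f t (t⁻¹ * g) - x := by
    intro g hg x
    have := hA2 (t⁻¹ * g) (hcoset g hg) x
    simpa [mul_inv_cancel_left] using this
  have hftt : ft f t (t * t) = 0 := by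
    have e : t⁻¹ * (t * t) * t = t * t := by group
    simp [ft, e]
  refine ⟨4 * D, by linarith, ⟨?_, ?_⟩, ?_⟩
  · -- each A g is an isometry and surjective up to C
    intro g
    have hiso : ∀ x y : ℝ, dist (A g x) (A g y) = dist x y := by
      intro x y
      by_cases hg : g ∈ H
      · rw [hA1 g hg x, hA1 g hg y, Real.dist_eq, Real.dist_eq]; ring_nf
      · rw [hA2' g hg x, hA2' g hg y, Real.dist_eq, Real.dist_eq, ← abs_neg]; ring_nf
    constructor
    · intro x y
      rw [hiso x y]
      constructor <;> [skip; skip] <;> · simp; linarith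
    · intro y
      by_cases hg : g ∈ H
      · exact ⟨y - ft f t g, by rw [hA1 g hg]; simp; linarith⟩
      · exact ⟨- ft f t (t⁻¹ * g) - y, by rw [hA2' g hg]; simp; linarith⟩
  · -- cocycle condition
    intro g h x
    by_cases hg : g ∈ H <;> by_cases hh : h ∈ H
    · have hgh : g * h ∈ H := H.mul_mem hg hh
      rw [hA1 h hh x, hA1 g hg, hA1 _ hgh, Real.dist_eq]
      have := abs_le.mp (hft2 g h hg hh)
      rw [abs_le]; constructor <;> linarith
    · have hgh : g * h ∉ H := by
        rw [Subgroup.mul_mem_iff_of_index_two hH]; simp [hg, hh]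
      set a := t⁻¹ * g * t with ha
      set b := t⁻¹ * h with hb
      have haH : a ∈ H := hconjmem g hg
      have hbH : b ∈ H := hcoset h hh
      have e : t⁻¹ * (g * h) = a * b := by rw [ha, hb]; group
      rw [hA2' h hh x, hA1 g hg, hA2' _ hgh, e, Real.dist_eq]
      have d1 := abs_le.mp (hft2 a b haH hbH)
      have d2 : ft f t a = - ft f t g := hneg g hg
      rw [abs_le]; constructor <;> linarith
    · have hgh : g * h ∉ H := by
        rw [Subgroup.mul_mem_iff_of_index_two hH]; simp [hg, hh]
      set a := t⁻¹ * g with ha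
      have haH : a ∈ H := hcoset g hg
      have e : t⁻¹ * (g * h) = a * h := by rw [ha]; group
      rw [hA1 h hh x, hA2' g hg, hA2' _ hgh, e, Real.dist_eq]
      have d1 := abs_le.mp (hft2 a h haH hh)
      rw [abs_le]; constructor <;> linarith
    · have hgh : g * h ∈ H := by
        rw [Subgroup.mul_mem_iff_of_index_two hH]; simp [hg, hh]
      set a := t⁻¹ * g with ha
      set b := t⁻¹ * h with hb
      have haH : a ∈ H := hcoset g hg
      have hbH : b ∈ H := hcoset h hh
      set v := t⁻¹ * a * t with hv
      have hvH : v ∈ H := hconjmem a haH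
      have e : g * h = (t * t) * (v * b) := by rw [hv, ha, hb]; group
      rw [hA2' h hh x, hA2' g hg, hA1 _ hgh, e, Real.dist_eq]
      have d1 := abs_le.mp (hft2 (t*t) (v*b) htt (H.mul_mem hvH hbH))
      have d2 := abs_le.mp (hft2 v b hvH hbH)
      have d3 : ft f t v = - ft f t a := hneg a haH
      rw [abs_le]; constructor <;> linarith
  · -- coboundedness
    intro x
    set c := ft f t h₀ with hc
    have hcpos : 0 < |c| := abs_pos.mpr hc0
    refine ⟨|c| / 2, by positivity, ?_⟩
    intro y
    set n : ℤ := round ((y - x) / c) with hn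
    refine ⟨h₀ ^ n, ?_⟩
    have hA : A (h₀ ^ n) x = (n : ℝ) * c + x := by
      rw [hA1 _ (H.zpow_mem hh₀ n), hfthom h₀ hh₀ n]
    rw [hA, Real.dist_eq]
    have e : (n : ℝ) * c + x - y = - (c * ((y - x)/c - (n : ℝ))) := by
      field_simp
      ring
    rw [e, abs_neg, abs_mul]
    have := abs_sub_round ((y - x) / c)
    calc |c| * |(y - x)/c - (n : ℝ)| ≤ |c| * (1/2) := by
          exact mul_le_mul_of_nonneg_left this (abs_nonneg c)
      _ = |c| / 2 := by ring
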